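/- arXiv:2302.13180 — 2 statements merged into one kernel-verified Lean document; each statement's English description precedes it below -/
import Mathlib

section
/- Let a, b be distinct nonzero real numbers, let σ₁, σ₂ be positive integers, and let i, j be nonnegative integers with i + j ≤ σ₁ + σ₂ − 1. Then for every real x with x ≠ −a and x ≠ −b: x^{i+j} / ((x+a)^{σ₁} (x+b)^{σ₂}) = Σ_{k=1}^{σ₁} A_k (x+a)^{−k} + Σ_{k=1}^{σ₂} B_k (x+b)^{−k}, where A_k = Σ_{l=0}^{σ₁−k} [C(σ₁−k, l)/(σ₁−k)!] (i+j−σ₁+k+l+1)_{σ₁−k−l} (σ₂)_l (−1)^{l} (−a)^{i+j−σ₁+k+l} (b−a)^{−σ₂−l} and B_k = Σ_{l=0}^{σ₂−k} [C(σ₂−k, l)/(σ₂−k)!] (i+j−σ₂+k+l+1)_{σ₂−k−l} (σ₁)_l (−1)^{l} (−b)^{i+j−σ₂+k+l} (a−b)^{−σ₁−l}. -/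
open Finset

/-- Partial fraction coefficient `A_k` (for the pole at `-a`). -/
noncomputable def pfA (i j σ1 σ2 k : ℕ) (a b : ℝ) : ℝ :=
  ∑ l ∈ Finset.range (σ1 - k + 1),
    ((σ1 - k).choose l : ℝ) / ((σ1 - k).factorial : ℝ) *
      (ascPochhammer ℝ (σ1 - k - l)).eval ((i : ℝ) + j - σ1 + k + l + 1) *
      (ascPochhammer ℝ l).eval (σ2 : ℝ) * (-1 : ℝ) ^ l *
      (-a) ^ ((i : ℤ) + j - σ1 + k + l) * (b - a) ^ (-(σ2 : ℤ) - l)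

/-- Partial fraction coefficient `B_k` (for the pole at `-b`). -/
noncomputable def pfB (i j σ1 σ2 k : ℕ) (a b : ℝ) : ℝ :=
  ∑ l ∈ Finset.range (σ2 - k + 1),
    ((σ2 - k).choose l : ℝ) / ((σ2 - k).factorial : ℝ) *
      (ascPochhammer ℝ (σ2 - k - l)).eval ((i : ℝ) + j - σ2 + k + l + 1) *
      (ascPochhammer ℝ l).eval (σ1 : ℝ) * (-1 : ℝ) ^ l *
      (-b) ^ ((i : ℤ) + j - σ2 + k + l) * (a - b) ^ (-(σ1 : ℤ) - l)

/-!
Clearing denominators, the claim is the polynomial identity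
`X ^ n = (X + b) ^ σ₂ * P_A + (X + a) ^ σ₁ * P_B` with `n = i + j` and
`P_A = ∑ₖ A_k (X + a) ^ (σ₁ - k)`. After the shift `X ↦ X - a`, the numbers `A_{σ₁ - m}`
(`m < σ₁`) are the first `σ₁` Taylor coefficients at `0` of `(X - a) ^ n * (X + (b - a)) ^ (-σ₂)`,
i.e. of the Cauchy product of `(X - a) ^ n` with the binomial series
`∑ₗ C(-σ₂, l) (b - a) ^ (-σ₂ - l) X ^ l`. Hence the difference of the two sides is divisible by
`(X + a) ^ σ₁`, and symmetrically by `(X + b) ^ σ₂`; these are coprime, and the difference has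
degree `< σ₁ + σ₂` because `n < σ₁ + σ₂`, so it vanishes.
-/

open Polynomial

theorem Nat.cast_choose_mul_zpow_sub {K : Type*} [DivisionRing K] (x : K) (n d : ℕ) :
    (n.choose d : K) * x ^ ((n : ℤ) - d) = n.choose d * x ^ (n - d) := by
  rcases le_or_gt d n with h | h
  · rw [← Nat.cast_sub h, zpow_natCast]
  · simp [Nat.choose_eq_zero_of_lt h]

theorem ascPochhammer_eval_natCast_sub_add_one {R : Type*} [Ring R] (n d : ℕ) :
    (ascPochhammer R d).eval ((n : R) - d + 1) = n.descFactorial d := by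
  rw [← descPochhammer_eval_eq_ascPochhammer, descPochhammer_eval_eq_descFactorial]

section
variable {K : Type*} [Field K] [CharZero K]

theorem Ring.choose_neg_natCast (σ l : ℕ) :
    Ring.choose (-(σ : K)) l = (-1) ^ l * (ascPochhammer K l).eval (σ : K) / l.factorial := by
  have hmul : (l.factorial : K) * multichoose (σ : K) l = (ascPochhammer K l).eval (σ : K) := by
    rw [← nsmul_eq_mul, Ring.factorial_nsmul_multichoose_eq_ascPochhammer,
      ascPochhammer_smeval_eq_eval]
  rw [Ring.choose_neg', Units.smul_def, zsmul_eq_mul, ← hmul, Int.coe_negOnePow_natCast]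
  push_cast
  rw [mul_div_assoc, mul_div_cancel_left₀ _ (Nat.cast_ne_zero.mpr l.factorial_ne_zero)]

theorem Ring.sum_antidiagonal_choose_neg_natCast_mul_choose (σ t : ℕ) :
    ∑ p ∈ antidiagonal t, Ring.choose (-(σ : K)) p.1 * σ.choose p.2 = if t = 0 then 1 else 0 := by
  have h := Ring.add_choose_eq (r := -(σ : K)) (s := σ) t (Commute.all _ _)
  simp only [Ring.choose_natCast, neg_add_cancel] at h
  rw [← h, ← Nat.cast_zero, Ring.choose_natCast]
  rcases t with _ | t <;> simp

end

namespace Polynomial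

section CommRing
variable {R : Type*} [CommRing R]

theorem coeff_sum_range_C_mul_X_pow (c : ℕ → R) (N d : ℕ) :
    (∑ m ∈ range N, C (c m) * X ^ m).coeff d = if d < N then c d else 0 := by
  simp only [finsetSum_coeff, coeff_C_mul_X_pow, sum_ite_eq, mem_range]

theorem X_pow_dvd_sub_mul_sum_range_coeff {f g h : R[X]} {N : ℕ} (hgh : X ^ N ∣ g * h - 1) :
    X ^ N ∣ f - h * ∑ m ∈ range N, C ((g * f).coeff m) * X ^ m := by
  have htrunc : X ^ N ∣ g * f - ∑ m ∈ range N, C ((g * f).coeff m) * X ^ m := by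
    rw [X_pow_dvd_iff]
    intro d hd
    rw [coeff_sub, coeff_sum_range_C_mul_X_pow, if_pos hd, sub_self]
  rw [show f - h * ∑ m ∈ range N, C ((g * f).coeff m) * X ^ m =
      -f * (g * h - 1) + h * (g * f - ∑ m ∈ range N, C ((g * f).coeff m) * X ^ m) by ring]
  exact dvd_add (hgh.mul_left _) (htrunc.mul_left _)

end CommRing

section Field
variable {K : Type*} [Field K]

noncomputable def principalPartNumerator (A : ℕ → K) (σ : ℕ) (a : K) : K[X] :=
  ∑ k ∈ Icc 1 σ, C (A k) * (X + C a) ^ (σ - k)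

theorem degree_principalPartNumerator_lt (A : ℕ → K) (σ : ℕ) (a : K) :
    (principalPartNumerator A σ a).degree < σ := by
  refine (degree_sum_le _ _).trans_lt ((Finset.sup_lt_iff (WithBot.bot_lt_coe σ)).mpr ?_)
  intro k hk
  rw [mem_Icc] at hk
  rw [← smul_eq_C_mul]
  refine (degree_smul_le _ _).trans_lt ?_
  rw [degree_pow, degree_X_add_C, nsmul_one]
  exact WithBot.coe_lt_coe.mpr (Nat.sub_lt_self hk.1 hk.2)

theorem eval_principalPartNumerator_div (A : ℕ → K) (σ : ℕ) {a x : K} (hx : x + a ≠ 0) :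
    (principalPartNumerator A σ a).eval x / (x + a) ^ σ =
      ∑ k ∈ Icc 1 σ, A k * (x + a) ^ (-(k : ℤ)) := by
  simp only [principalPartNumerator, eval_finsetSum, eval_mul, eval_C, eval_pow, eval_add,
    eval_X, sum_div, mul_div_assoc]
  refine sum_congr rfl fun k hk => ?_
  rw [mem_Icc] at hk
  rw [← zpow_natCast, ← zpow_natCast, ← zpow_sub₀ hx, Nat.cast_sub hk.2]
  ring_nf

theorem principalPartNumerator_sub_eq_sum_range (t : ℕ → K) (σ : ℕ) (a : K) :
    principalPartNumerator (fun k => t (σ - k)) σ a = ∑ m ∈ range σ, C (t m) * (X + C a) ^ m := by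
  refine sum_nbij' (fun k => σ - k) (fun m => σ - m) ?_ ?_ ?_ ?_ ?_ <;>
    intro k hk <;> simp only [mem_Icc, mem_range] at hk ⊢
  all_goals omega

theorem degree_X_add_C_pow_mul_lt (c : K) (m : ℕ) {p : K[X]} {r : ℕ}
    (hp : p.degree < r) : ((X + C c) ^ m * p).degree < ((m + r : ℕ) : WithBot ℕ) := by
  rw [degree_mul, degree_pow, degree_X_add_C, nsmul_one, Nat.cast_add]
  exact WithBot.add_lt_add_left (WithBot.natCast_ne_bot m) hp

theorem isCoprime_X_add_C_pow_X_add_C_pow {a b : K} (hab : a ≠ b) (m n : ℕ) :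
    IsCoprime ((X + C a) ^ m) ((X + C b) ^ n) := by
  simp only [← sub_neg_eq_add, ← C_neg]
  exact (isCoprime_X_sub_C_of_isUnit_sub (sub_ne_zero.mpr (neg_injective.ne hab)).isUnit).pow

variable [CharZero K]

noncomputable def truncInvXAddCPow (σ N : ℕ) (c : K) : K[X] :=
  ∑ l ∈ range N, C (Ring.choose (-(σ : K)) l * c ^ (-(σ : ℤ) - l)) * X ^ l

theorem X_pow_dvd_truncInvXAddCPow_mul_sub_one {c : K} (hc : c ≠ 0) (σ N : ℕ) :
    X ^ N ∣ truncInvXAddCPow σ N c * (X + C c) ^ σ - 1 := by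
  rw [X_pow_dvd_iff]
  intro t ht
  have hterm : ∀ p ∈ antidiagonal t, (truncInvXAddCPow σ N c).coeff p.1 * ((X + C c) ^ σ).coeff p.2
      = c ^ (-(t : ℤ)) * (Ring.choose (-(σ : K)) p.1 * σ.choose p.2) := by
    intro p hp
    rw [HasAntidiagonal.mem_antidiagonal] at hp
    have hpow : c ^ (-(σ : ℤ) - p.1) * c ^ ((σ : ℤ) - p.2) = c ^ (-(t : ℤ)) := by
      rw [← zpow_add₀ hc]
      congr 1
      omega
    rw [truncInvXAddCPow, coeff_sum_range_C_mul_X_pow, if_pos (by omega), coeff_X_add_C_pow,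
      mul_comm (c ^ _), ← Nat.cast_choose_mul_zpow_sub]
    linear_combination (Ring.choose (-(σ : K)) p.1 * σ.choose p.2) * hpow
  rw [coeff_sub, coeff_one, coeff_mul, sum_congr rfl hterm, ← mul_sum,
    Ring.sum_antidiagonal_choose_neg_natCast_mul_choose]
  split_ifs <;> simp_all

theorem X_add_C_pow_dvd_X_pow_sub_mul_principalPartNumerator {a b : K} (hab : a ≠ b)
    (n σ1 σ2 : ℕ) :
    (X + C a) ^ σ1 ∣ X ^ n - (X + C b) ^ σ2 * principalPartNumerator
      (fun k => (truncInvXAddCPow σ2 σ1 (b - a) * (X - C a) ^ n).coeff (σ1 - k)) σ1 a := by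
  have hdvd₀ := X_pow_dvd_sub_mul_sum_range_coeff (f := (X - C a) ^ n)
    (X_pow_dvd_truncInvXAddCPow_mul_sub_one (sub_ne_zero.mpr hab.symm) σ2 σ1)
  have hdvd := _root_.map_dvd (taylorAlgHom a) hdvd₀
  simpa [principalPartNumerator_sub_eq_sum_range, taylor_X, taylor_C, add_assoc, ← C_add] using hdvd

end Field

end Polynomial

theorem pfA_eq_coeff (i j σ1 σ2 : ℕ) (a b : ℝ) {k : ℕ} (hk : k ∈ Icc 1 σ1) :
    pfA i j σ1 σ2 k a b =
      (truncInvXAddCPow σ2 σ1 (b - a) * (X - C a) ^ (i + j)).coeff (σ1 - k) := by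
  rw [mem_Icc] at hk
  rw [coeff_mul, Nat.sum_antidiagonal_eq_sum_range_succ_mk, pfA]
  refine sum_congr rfl fun l hl => ?_
  rw [mem_range] at hl
  have harg : (i : ℝ) + j - σ1 + k + l + 1 = ((i + j : ℕ) : ℝ) - (σ1 - k - l : ℕ) + 1 := by
    push_cast [Nat.cast_sub hk.2, Nat.cast_sub (show l ≤ σ1 - k by omega)]
    ring
  have hexp : (i : ℤ) + j - σ1 + k + l = ((i + j : ℕ) : ℤ) - (σ1 - k - l : ℕ) := by omega
  -- `(n - d + 1)_d = n.descFactorial d` vanishes for `d > n`, so negative powers of `-a` drop out.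
  rw [harg, hexp, truncInvXAddCPow, coeff_sum_range_C_mul_X_pow, if_pos (by omega),
    show (X - C a : ℝ[X]) = X + C (-a) by rw [C_neg, sub_eq_add_neg],
    coeff_X_add_C_pow, Ring.choose_neg_natCast, ascPochhammer_eval_natCast_sub_add_one,
    Nat.descFactorial_eq_factorial_mul_choose, mul_comm ((-a) ^ _), ← Nat.cast_choose_mul_zpow_sub,
    Nat.cast_choose ℝ (show l ≤ σ1 - k by omega)]
  push_cast
  field_simp

theorem X_add_C_pow_dvd_X_pow_sub_mul_pfA {a b : ℝ} (hab : a ≠ b) (i j σ1 σ2 : ℕ) :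
    (X + C a) ^ σ1 ∣ X ^ (i + j) - (X + C b) ^ σ2 *
      principalPartNumerator (fun k => pfA i j σ1 σ2 k a b) σ1 a := by
  convert X_add_C_pow_dvd_X_pow_sub_mul_principalPartNumerator hab (i + j) σ1 σ2 using 3
  exact sum_congr rfl fun k hk => by simp only [pfA_eq_coeff i j σ1 σ2 a b hk]

theorem X_pow_eq_add_principalPartNumerator {a b : ℝ} (hab : a ≠ b) {i j σ1 σ2 : ℕ}
    (hn : i + j < σ1 + σ2) :
    (X : ℝ[X]) ^ (i + j) =
      (X + C b) ^ σ2 * principalPartNumerator (fun k => pfA i j σ1 σ2 k a b) σ1 a +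
        (X + C a) ^ σ1 * principalPartNumerator (fun k => pfB i j σ1 σ2 k a b) σ2 b := by
  set PA := principalPartNumerator (fun k => pfA i j σ1 σ2 k a b) σ1 a
  set PB := principalPartNumerator (fun k => pfB i j σ1 σ2 k a b) σ2 b
  set D := X ^ (i + j) - (X + C b) ^ σ2 * PA - (X + C a) ^ σ1 * PB
  have hdvdA : (X + C a) ^ σ1 ∣ D :=
    (X_add_C_pow_dvd_X_pow_sub_mul_pfA hab i j σ1 σ2).sub (dvd_mul_right _ _)
  have hdvdB : (X + C b) ^ σ2 ∣ D := by
    rw [show D = X ^ (i + j) - (X + C a) ^ σ1 * PB - (X + C b) ^ σ2 * PA by ring]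
    exact (X_add_C_pow_dvd_X_pow_sub_mul_pfA hab.symm i j σ2 σ1).sub (dvd_mul_right _ _)
  have hdeg : D.degree < ((X + C a) ^ σ1 * (X + C b) ^ σ2).degree := by
    simp only [degree_mul, degree_pow, degree_X_add_C, nsmul_one, ← Nat.cast_add]
    refine (degree_sub_le _ _).trans_lt (max_lt ((degree_sub_le _ _).trans_lt (max_lt ?_ ?_)) ?_)
    · rw [degree_X_pow]
      exact_mod_cast hn
    · rw [add_comm σ1]
      exact degree_X_add_C_pow_mul_lt b σ2 (degree_principalPartNumerator_lt _ σ1 a)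
    · exact degree_X_add_C_pow_mul_lt a σ1 (degree_principalPartNumerator_lt _ σ2 b)
  have hD : D = 0 := eq_zero_of_dvd_of_degree_lt
    ((isCoprime_X_add_C_pow_X_add_C_pow hab σ1 σ2).mul_dvd hdvdA hdvdB) hdeg
  linear_combination hD

theorem partial_fraction_expansion_general (a b : ℝ) (hab : a ≠ b)
    (σ1 σ2 : ℕ) (hσ1 : 0 < σ1) (i j : ℕ) (hij : i + j ≤ σ1 + σ2 - 1)
    (x : ℝ) (hxa : x ≠ -a) (hxb : x ≠ -b) :
    x ^ (i + j) / ((x + a) ^ σ1 * (x + b) ^ σ2) =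
      (∑ k ∈ Finset.Icc 1 σ1, pfA i j σ1 σ2 k a b * (x + a) ^ (-(k : ℤ))) +
        ∑ k ∈ Finset.Icc 1 σ2, pfB i j σ1 σ2 k a b * (x + b) ^ (-(k : ℤ)) := by
  have hxa' : x + a ≠ 0 := fun h => hxa (eq_neg_of_add_eq_zero_left h)
  have hxb' : x + b ≠ 0 := fun h => hxb (eq_neg_of_add_eq_zero_left h)
  have hn : i + j < σ1 + σ2 := by omega
  have hpoly := congrArg (eval x) (X_pow_eq_add_principalPartNumerator hab hn)
  simp only [eval_add, eval_mul, eval_pow, eval_X, eval_C] at hpoly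
  rw [hpoly, ← eval_principalPartNumerator_div _ _ hxa', ← eval_principalPartNumerator_div _ _ hxb']
  field_simp

theorem partial_fraction_expansion (a b : ℝ) (ha : a ≠ 0) (hb : b ≠ 0) (hab : a ≠ b)
    (σ1 σ2 : ℕ) (hσ1 : 0 < σ1) (hσ2 : 0 < σ2) (i j : ℕ) (hij : i + j ≤ σ1 + σ2 - 1)
    (x : ℝ) (hxa : x ≠ -a) (hxb : x ≠ -b) :
    x ^ (i + j) / ((x + a) ^ σ1 * (x + b) ^ σ2) =
      (∑ k ∈ Finset.Icc 1 σ1, pfA i j σ1 σ2 k a b * (x + a) ^ (-(k : ℤ))) +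
        ∑ k ∈ Finset.Icc 1 σ2, pfB i j σ1 σ2 k a b * (x + b) ^ (-(k : ℤ)) :=
  partial_fraction_expansion_general a b hab σ1 σ2 hσ1 i j hij x hxa hxb
end

section
/- Fix real parameters α > 0, β > 0 with α + β < 1, γ̄ > 0, γ_th > 0, and a positive integer m. Then the exponential average of the asymptotic outage probability of the squared Rician shadowed distribution satisfies: ∫₀^∞ (γ_th (1 + K_x)/γ̄_x) · (m/(m + K_x))^{m} e^{−x} dx = (γ_th/(α γ̄)) Σ_{j=0}^{m−1} C(m−1, j) ((1−β−α)/α)^{m−1−j} · Γ(1+j) · U(m, m−j, 1/α − β(m−1)/(mα) − 1), where Γ(1+j)·U(m, m−j, z) is characterized for z > 0 by Γ(1+j)·U(m, m−j, z) = ∫₀^∞ x^{j} e^{−x} (x + z)^{−m} dx (the integral representation of Tricomi's confluent hypergeometric function). -/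
/-!
With `c = (1 - β - α) / α` one has `1 - β - α (1 - x) = α (x + c)`, and the Tricomi argument is
`z = c + β / (m α)`, so `m α (x + z) = m α (x + c) + β`. Hence `(1 + K_x) / (1 - α (1 - x)) = 1 / (α (x + c))`
and `m / (m + K_x) = (x + c) / (x + z)`: the integrand is `γ_th / (α γ̄) · (x + c)^(m-1) e^(-x) (x + z)^(-m)`.
Expanding `(x + c)^(m-1)` binomially and integrating term by term gives the sum; every term is
integrable because `(x + z)^(-m) ≤ z^(-m)` on `x > 0` and `x^j e^(-x)` is a Gamma integrand.
-/

open MeasureTheory Finset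

theorem integrableOn_pow_mul_exp_neg_Ioi (j : ℕ) :
    IntegrableOn (fun x : ℝ => x ^ j * Real.exp (-x)) (Set.Ioi 0) := by
  simpa [mul_comm, Real.rpow_natCast] using Real.GammaIntegral_convergent (s := j + 1) (by positivity)

theorem integrableOn_pow_mul_exp_neg_mul_add_zpow_neg_Ioi {z : ℝ} (hz : 0 < z) (j n : ℕ) :
    IntegrableOn (fun x : ℝ => x ^ j * Real.exp (-x) * (x + z) ^ (-(n : ℤ))) (Set.Ioi 0) := by
  refine (integrableOn_pow_mul_exp_neg_Ioi j).mul_bdd (c := z ^ (-(n : ℤ)))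
    (Measurable.aestronglyMeasurable (by fun_prop)) ?_
  filter_upwards [ae_restrict_mem measurableSet_Ioi] with x (hx : 0 < x)
  rw [Real.norm_of_nonneg (by positivity), zpow_neg, zpow_neg, zpow_natCast, zpow_natCast]
  gcongr
  linarith

theorem integral_add_pow_mul_eq_sum {s : Set ℝ} {μ : Measure ℝ} {g : ℝ → ℝ} (c : ℝ) (k : ℕ)
    (hg : ∀ j ≤ k, IntegrableOn (fun x => x ^ j * g x) s μ) :
    ∫ x in s, (x + c) ^ k * g x ∂μ =
      ∑ j ∈ range (k + 1), (k.choose j : ℝ) * c ^ (k - j) * ∫ x in s, x ^ j * g x ∂μ := by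
  have h_expand : ∀ x, (x + c) ^ k * g x =
      ∑ j ∈ range (k + 1), (k.choose j : ℝ) * c ^ (k - j) * (x ^ j * g x) := fun x => by
    rw [add_pow, sum_mul]
    exact sum_congr rfl fun j _ => by ring
  simp_rw [h_expand]
  rw [integral_finsetSum _ fun j hj => (hg j (mem_range_succ_iff.mp hj)).const_mul _]
  exact sum_congr rfl fun j _ => integral_const_mul _ _

theorem one_div_sub_div_sub_one_eq_add_div {α β : ℝ} {m : ℕ} (hm : 0 < m) (hα : α ≠ 0) :
    1 / α - β * ((m : ℝ) - 1) / (m * α) - 1 = (1 - β - α) / α + β / (m * α) := by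
  have : (m : ℝ) ≠ 0 := by positivity
  field_simp
  ring

theorem outage_integrand_eq {α β x : ℝ} (γth γbar : ℝ) {m : ℕ} (hm : 0 < m) (hα : 0 < α)
    (hβ : 0 < β) (hαβ : α + β < 1) (hx : 0 ≤ x) :
    (γth * (1 + β / (1 - β - α * (1 - x))) / (γbar * (1 - α * (1 - x)))) *
        ((m : ℝ) / (m + β / (1 - β - α * (1 - x)))) ^ m * Real.exp (-x) =
      γth / (α * γbar) * ((x + (1 - β - α) / α) ^ (m - 1) *
        (Real.exp (-x) * (x + ((1 - β - α) / α + β / (m * α))) ^ (-(m : ℤ)))) := by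
  obtain ⟨k, rfl⟩ := Nat.exists_eq_add_one_of_ne_zero hm.ne'
  set a := 1 - β - α * (1 - x)
  have ha : 0 < a := by nlinarith
  have hxc : x + (1 - β - α) / α = a / α := by field_simp; ring
  have hxz : x + ((1 - β - α) / α + β / ((k + 1 : ℕ) * α)) =
      ((k + 1 : ℕ) * a + β) / ((k + 1 : ℕ) * α) := by field_simp; ring
  have hK : (1 + β / a) / (1 - α * (1 - x)) = 1 / a := by
    rw [show 1 - α * (1 - x) = a + β by ring]
    field_simp
  have hratio : ((k + 1 : ℕ) : ℝ) / ((k + 1 : ℕ) + β / a) =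
      (a / α) / (((k + 1 : ℕ) * a + β) / ((k + 1 : ℕ) * α)) := by
    field_simp
  rw [mul_div_mul_comm, hK, hratio, hxc, hxz, Nat.add_sub_cancel, zpow_neg, zpow_natCast]
  have hv : 0 < ((k + 1 : ℕ) * a + β) / ((k + 1 : ℕ) * α) := by positivity
  generalize ((k + 1 : ℕ) * a + β) / ((k + 1 : ℕ) * α) = v at hv
  rw [div_pow (a / α), pow_succ (a / α)]
  field_simp

theorem fSOSF_asymptotic_outage_general (α β γbar γth : ℝ) (m : ℕ) (hm : 0 < m)
    (hα : 0 < α) (hβ : 0 < β) (hαβ : α + β < 1) :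
    (∫ x in Set.Ioi (0 : ℝ),
        (γth * (1 + β / (1 - β - α * (1 - x))) / (γbar * (1 - α * (1 - x)))) *
          ((m : ℝ) / (m + β / (1 - β - α * (1 - x)))) ^ m * Real.exp (-x)) =
      (γth / (α * γbar)) *
        ∑ j ∈ Finset.range m,
          ((m - 1).choose j : ℝ) * ((1 - β - α) / α) ^ (m - 1 - j) *
            ∫ x in Set.Ioi (0 : ℝ),
              x ^ j * Real.exp (-x) *
                (x + (1 / α - β * ((m : ℝ) - 1) / (m * α) - 1)) ^ (-(m : ℤ)) := by
  rw [one_div_sub_div_sub_one_eq_add_div hm hα.ne']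
  have hz : 0 < (1 - β - α) / α + β / (m * α) := by
    have : 0 < 1 - β - α := by linarith
    positivity
  rw [setIntegral_congr_fun measurableSet_Ioi fun x hx =>
      outage_integrand_eq γth γbar hm hα hβ hαβ (le_of_lt hx),
    integral_const_mul, integral_add_pow_mul_eq_sum, Nat.sub_add_cancel hm]
  · simp only [mul_assoc]
  · intro j _
    simpa only [mul_assoc] using integrableOn_pow_mul_exp_neg_mul_add_zpow_neg_Ioi hz j m

theorem fSOSF_asymptotic_outage (α β γbar γth : ℝ) (m : ℕ) (hm : 0 < m)
    (hα : 0 < α) (hβ : 0 < β) (hαβ : α + β < 1) (hγbar : 0 < γbar) (hγth : 0 < γth) :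
    (∫ x in Set.Ioi (0 : ℝ),
        (γth * (1 + β / (1 - β - α * (1 - x))) / (γbar * (1 - α * (1 - x)))) *
          ((m : ℝ) / (m + β / (1 - β - α * (1 - x)))) ^ m * Real.exp (-x)) =
      (γth / (α * γbar)) *
        ∑ j ∈ Finset.range m,
          ((m - 1).choose j : ℝ) * ((1 - β - α) / α) ^ (m - 1 - j) *
            ∫ x in Set.Ioi (0 : ℝ),
              x ^ j * Real.exp (-x) *
                (x + (1 / α - β * ((m : ℝ) - 1) / (m * α) - 1)) ^ (-(m : ℤ)) :=
  fSOSF_asymptotic_outage_general α β γbar γth m hm hα hβ hαβ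
end
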